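/- arXiv:2108.06945 — 2 statements merged into one kernel-verified Lean document; each statement's English description precedes it below -/
import Mathlib

section
/- Under the identification of H²(𝔻) with ℓ²(ℕ,ℂ), the Toeplitz operator T_φ with symbol φ ∈ L^∞(𝕋) acts on basis vectors by T_φ e_j = Σ_{m≥0} φ̂(m−j) e_m. Fix n ≥ 1 and let C_n be the block-reversal conjugation: C_n e_{nk+m} = e_{nk+(n−1−m)} for 0 ≤ m ≤ n−1, extended conjugate-linearly. If φ̂(nl) = φ̂(−nl) and φ̂(r+nl) = 0 for all l ∈ ℤ and 1 ≤ r ≤ n−1, then T_φ C_n = C_n T_{conj(φ)}. -/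
/-!
Write `σ` for the block reversal `nk + m ↦ nk + (n - 1 - m)`, an involution of `ℕ`, so that
`(C x) q = conj (x (σ q))`. Expanding `x` in the basis and reindexing by `σ`, the `p`-th
coordinates of `T (C x)` and `C (Tconj x)` become `∑ j, conj (x j) * φ̂ (p - σ j)` and
`∑ j, conj (x j) * φ̂ (j - σ p)`. The integers `p - σ j` and `j - σ p` are congruent mod `n`,
and when `n` divides them they are negatives of each other; the hypotheses say that `φ̂` vanishes
off `nℤ` and is even on `nℤ`, so the two sums agree termwise.
-/

open scoped ComplexConjugate

/-- The Hardy space `H²(𝔻)`, identified with `ℓ²(ℕ, ℂ)` via `z^n ↦ e n`. -/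
noncomputable abbrev HardySpace := lp (fun _ : ℕ => ℂ) 2

/-- The standard basis vector `e j`, corresponding to `z^j`. -/
noncomputable def e (j : ℕ) : HardySpace := lp.single 2 j 1

lemma lp_single_eq_smul_e (j : ℕ) (a : ℂ) : lp.single 2 j a = a • e j := by
  rw [e, ← lp.single_smul, smul_eq_mul, mul_one]

lemma hasSum_mul_apply_e (S : HardySpace →L[ℂ] HardySpace) (x : HardySpace) (p : ℕ) :
    HasSum (fun j => x j * S (e j) p) (S x p) := by
  have h := (lp.hasSum_single (by norm_num) x).mapL ((lp.evalCLM ℂ _ 2 p).comp S)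
  simp only [ContinuousLinearMap.comp_apply, lp_single_eq_smul_e, map_smul] at h
  exact h

section

variable {n : ℕ}

lemma coeff_eq_zero_of_not_dvd {c : ℤ → ℂ} (hn : 0 < n)
    (hzero : ∀ (l : ℤ) (r : ℕ), 1 ≤ r → r ≤ n - 1 → c ((r : ℤ) + n * l) = 0)
    {A : ℤ} (hA : ¬ (n : ℤ) ∣ A) : c A = 0 := by
  have hr : (A % n).toNat = A % n := Int.toNat_of_nonneg (Int.emod_nonneg A (by omega))
  have hlt : A % n < n := Int.emod_lt_of_pos A (by omega)
  have hne : A % n ≠ 0 := fun h => hA (Int.dvd_of_emod_eq_zero h)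
  rw [← Int.emod_add_mul_ediv A n, ← hr]
  exact hzero (A / n) _ (by omega) (by omega)

lemma coeff_eq_of_dvd_sub {c : ℤ → ℂ} (hn : 0 < n)
    (heven : ∀ l : ℤ, c ((n : ℤ) * l) = c (-((n : ℤ) * l)))
    (hzero : ∀ (l : ℤ) (r : ℕ), 1 ≤ r → r ≤ n - 1 → c ((r : ℤ) + n * l) = 0)
    {A B : ℤ} (hAB : (n : ℤ) ∣ A - B) (hneg : (n : ℤ) ∣ A → B = -A) : c A = c B := by
  by_cases hA : (n : ℤ) ∣ A
  · obtain ⟨l, rfl⟩ := hA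
    rw [hneg ⟨l, rfl⟩, heven l]
  · have hB : ¬ (n : ℤ) ∣ B := fun hB => hA (by simpa using hAB.add hB)
    rw [coeff_eq_zero_of_not_dvd hn hzero hA, coeff_eq_zero_of_not_dvd hn hzero hB]

def blockRev (n j : ℕ) : ℕ := n * (j / n) + (n - 1 - j % n)

lemma blockRev_mul_add (k : ℕ) {m : ℕ} (hm : m < n) :
    blockRev n (n * k + m) = n * k + (n - 1 - m) := by
  have hn : 0 < n := by omega
  rw [blockRev, Nat.mul_add_div hn, Nat.div_eq_of_lt hm, Nat.mul_add_mod, Nat.mod_eq_of_lt hm,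
    add_zero]

lemma exists_eq_mul_add (hn : 0 < n) (j : ℕ) : ∃ k m, m < n ∧ j = n * k + m :=
  ⟨j / n, j % n, Nat.mod_lt j hn, (Nat.div_add_mod j n).symm⟩

lemma blockRev_involutive (hn : 0 < n) : Function.Involutive (blockRev n) := by
  intro j
  obtain ⟨k, m, hm, rfl⟩ := exists_eq_mul_add hn j
  rw [blockRev_mul_add k hm, blockRev_mul_add k (by omega : n - 1 - m < n)]
  omega

lemma coeff_sub_blockRev_comm {c : ℤ → ℂ} (hn : 0 < n)
    (heven : ∀ l : ℤ, c ((n : ℤ) * l) = c (-((n : ℤ) * l)))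
    (hzero : ∀ (l : ℤ) (r : ℕ), 1 ≤ r → r ≤ n - 1 → c ((r : ℤ) + n * l) = 0) (p j : ℕ) :
    c (p - blockRev n j) = c (j - blockRev n p) := by
  obtain ⟨a, b, hb, rfl⟩ := exists_eq_mul_add hn p
  obtain ⟨a', b', hb', rfl⟩ := exists_eq_mul_add hn j
  rw [blockRev_mul_add a hb, blockRev_mul_add a' hb']
  set r : ℤ := b + b' + 1 - n
  have hA : ((n * a + b : ℕ) : ℤ) - ((n * a' + (n - 1 - b') : ℕ) : ℤ) = n * (a - a') + r := by
    push_cast [Nat.cast_sub (by omega : 1 ≤ n), Nat.cast_sub (by omega : b' ≤ n - 1)]; ring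
  have hB : ((n * a' + b' : ℕ) : ℤ) - ((n * a + (n - 1 - b) : ℕ) : ℤ) = n * (a' - a) + r := by
    push_cast [Nat.cast_sub (by omega : 1 ≤ n), Nat.cast_sub (by omega : b ≤ n - 1)]; ring
  rw [hA, hB]
  refine coeff_eq_of_dvd_sub hn heven hzero ⟨2 * (a - a'), by ring⟩ fun hdvd => ?_
  have hr0 : r = 0 := Int.eq_zero_of_abs_lt_dvd ((dvd_add_right (dvd_mul_right _ _)).mp hdvd)
    (abs_lt.mpr ⟨by omega, by omega⟩)
  rw [hr0]
  ring

end

/-- Sufficiency: if `φhat (nl) = φhat (-nl)` and `φhat (r+nl) = 0` for all `l ∈ ℤ`,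
`1 ≤ r ≤ n-1`, then `T_φ C_n = C_n T_{conj φ}`, where `T_φ` acts on the basis by
`(T_φ e_j)_m = φhat (m-j)`, `T_{conj φ}` by `(T_{conj φ} e_j)_m = conj (φhat (j-m))`, and
`C_n` is the block-reversal conjugation. -/
theorem toeplitz_Cn_symmetric_of_coeff (n : ℕ) (hn : 1 ≤ n) (φhat : ℤ → ℂ)
    (T Tconj : HardySpace →L[ℂ] HardySpace)
    (hT : ∀ j m : ℕ, (T (e j)) m = φhat ((m : ℤ) - (j : ℤ)))
    (hTconj : ∀ j m : ℕ, (Tconj (e j)) m = conj (φhat ((j : ℤ) - (m : ℤ))))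
    (C : HardySpace → HardySpace)
    (hC : ∀ (a : HardySpace) (k m : ℕ), m < n →
      (C a) (n * k + m) = conj (a (n * k + (n - 1 - m))))
    (heven : ∀ l : ℤ, φhat ((n : ℤ) * l) = φhat (-((n : ℤ) * l)))
    (hzero : ∀ (l : ℤ) (r : ℕ), 1 ≤ r → r ≤ n - 1 → φhat ((r : ℤ) + n * l) = 0) :
    ∀ x, T (C x) = C (Tconj x) := by
  have hCσ : ∀ a q, C a q = conj (a (blockRev n q)) := fun a q => by
    have h := hC a (q / n) (q % n) (Nat.mod_lt q hn)
    rwa [Nat.div_add_mod] at h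
  have hσ := blockRev_involutive hn
  intro x
  refine lp.ext (funext fun p => ?_)
  have hL : HasSum (fun j => conj (x j) * φhat (p - blockRev n j)) (T (C x) p) := by
    have h := hasSum_mul_apply_e T (C x) p
    simp only [hT, hCσ] at h
    refine (hσ.toPerm _).hasSum_iff.mp ?_
    convert h using 2 with j
    simp [hσ j]
  have hR : HasSum (fun j => conj (x j) * φhat (j - blockRev n p)) (C (Tconj x) p) := by
    rw [hCσ]
    simpa [hTconj, Function.comp_def] using
      (hasSum_mul_apply_e Tconj x (blockRev n p)).map (starRingEnd ℂ) Complex.continuous_conj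
  simp_rw [coeff_sub_blockRev_comm hn heven hzero p] at hL
  exact hL.unique hR
end

section
/- Let φ ∈ L^∞(𝕋) and fix even p and i, j with 0 ≤ i < j < p and j − i = p/2. Let C_p^{i,j} be the transposition conjugation on H²(𝔻) swapping the coefficients of z^{i+pk} and z^{j+pk} (up to complex conjugation) and conjugating all other coefficients. Then T_φ is C_p^{i,j}-symmetric (i.e., C_p^{i,j} T_φ C_p^{i,j} = T_φ*) if and only if φ̂(pl) = φ̂(−pl) for all l ∈ ℤ, and φ̂(r+pl) = 0 for all l ∈ ℤ and 1 ≤ r ≤ p−1. -/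
/-!
Write `C a = conj ∘ a ∘ σ`, where `σ` swaps the residue classes of `i` and `j` modulo `p`. On
matrix entries, `C T_φ C = T_φ*` says `φ̂ (σ m - σ n) = φ̂ (n - m)` for all `m, n`. Since `σ`
commutes with translation by `p`, it preserves differences inside a residue class and keeps
distinct classes apart, so every symbol that is even on `pℤ` and vanishes off `pℤ` satisfies this.
Conversely, comparing entries in the rows and columns of `i` and `j` shows that `φ̂` is even on
`pℤ` and, because `j - i = p / 2`, `2p`-periodic on every other residue class; being
square-summable, it vanishes there.
-/

open scoped ComplexConjugate

open ContinuousLinearMap (adjoint)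

lemma e_apply (n m : ℕ) : e n m = if m = n then 1 else 0 := by
  rw [e, lp.single_apply]
  split_ifs <;> simp_all

lemma inner_e_left (f : HardySpace) (m : ℕ) : inner ℂ (e m) f = f m := by
  simp [e, lp.inner_single_left]

lemma hasSum_mul_apply_e_s8 (T : HardySpace →L[ℂ] HardySpace) (y : HardySpace) (μ : ℕ) :
    HasSum (fun k => y k * T (e k) μ) (T y μ) := by
  have hy : HasSum (fun k => y k • e k) y := by
    simpa [e, ← lp.single_smul] using lp.hasSum_single (by norm_num) y
  simpa [inner_e_left] using (innerSL ℂ (e μ)).hasSum (T.hasSum hy)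

lemma adjoint_e_apply (T : HardySpace →L[ℂ] HardySpace) (n m : ℕ) :
    adjoint T (e n) m = conj (T (e m) n) := by
  rw [← inner_e_left, ContinuousLinearMap.adjoint_inner_right, ← inner_conj_symm, inner_e_left]

lemma hasSum_adjoint_apply (T : HardySpace →L[ℂ] HardySpace) (x : HardySpace) (n : ℕ) :
    HasSum (fun k => conj (T (e n) k) * x k) (adjoint T x n) := by
  rw [← inner_e_left, ContinuousLinearMap.adjoint_inner_right]
  simpa [mul_comm] using lp.hasSum_inner (𝕜 := ℂ) (T (e n)) x

lemma comp_conj_perm_eq_adjoint_iff {σ : ℕ → ℕ} (hσ : Function.Involutive σ)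
    {C : HardySpace → HardySpace} (hC : ∀ a n, C a n = conj (a (σ n)))
    (T : HardySpace →L[ℂ] HardySpace) :
    (∀ x, C (T (C x)) = adjoint T x) ↔ ∀ m n, T (e (σ n)) (σ m) = T (e m) n := by
  have hCe : ∀ n, C (e n) = e (σ n) := fun n => lp.ext <| funext fun m => by
    simp [hC, e_apply, hσ.eq_iff]
  constructor
  · intro h m n
    have := congrArg (fun f : HardySpace => f m) (h (e n))
    simp only [hC, hCe, adjoint_e_apply] at this
    exact star_injective this
  · intro h x
    ext n
    have hsum := (hσ.toPerm σ).hasSum_iff.mpr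
      ((hasSum_mul_apply_e_s8 T (C x) (σ n)).map (starRingEnd ℂ) continuous_star)
    rw [hC]
    refine hsum.unique ((hasSum_adjoint_apply T x n).congr_fun fun k => ?_)
    simp [hC, hσ k, h n k, mul_comm]

def IsSwapSymmetric {α : Type*} (σ : ℤ → ℤ) (φ : ℤ → α) : Prop :=
  ∀ m n, φ (σ m - σ n) = φ (n - m)

lemma forall_natCast_iff_forall {P : ℤ → ℤ → Prop} {c : ℤ} (hc : 0 < c)
    (hP : ∀ m n k, P (m + c * k) (n + c * k) → P m n) :
    (∀ m n : ℕ, P m n) ↔ ∀ m n : ℤ, P m n := by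
  refine ⟨fun h m n => hP m n (|m| + |n|) ?_, fun h m n => h m n⟩
  have hk : |m| + |n| ≤ c * (|m| + |n|) := le_mul_of_one_le_left (by positivity) hc
  have hm : 0 ≤ m + c * (|m| + |n|) := by linarith [neg_abs_le m, abs_nonneg n]
  have hn : 0 ≤ n + c * (|m| + |n|) := by linarith [neg_abs_le n, abs_nonneg m]
  have := h (m + c * (|m| + |n|)).toNat (n + c * (|m| + |n|)).toNat
  rwa [Int.toNat_of_nonneg hm, Int.toNat_of_nonneg hn] at this

lemma isSwapSymmetric_iff_forall_natCast {α : Type*} {p : ℤ} {φ : ℤ → α} {σ : ℤ → ℤ}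
    (hσp : ∀ x k, σ (x + p * k) = σ x + p * k) (hp : 0 < p) :
    IsSwapSymmetric σ φ ↔ ∀ m n : ℕ, φ (σ m - σ n) = φ (n - m) :=
  (forall_natCast_iff_forall hp fun m n k h => by
    rwa [hσp, hσp, add_sub_add_right_eq_sub, add_sub_add_right_eq_sub] at h).symm

lemma forall_add_mul_eq_zero_iff {α : Type*} [Zero α] {φ : ℤ → α} {p : ℕ} (hp : 0 < p) :
    (∀ (l : ℤ) (r : ℕ), 1 ≤ r → r ≤ p - 1 → φ (r + p * l) = 0) ↔
      ∀ x, ¬(p : ℤ) ∣ x → φ x = 0 := by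
  constructor
  · intro h x hx
    have h₀ : 0 ≤ x % p := Int.emod_nonneg x (by omega)
    have hlt : x % p < p := Int.emod_lt_of_pos x (by omega)
    have hne : x % p ≠ 0 := fun h₀ => hx (Int.dvd_of_emod_eq_zero h₀)
    simpa [Int.toNat_of_nonneg h₀, Int.emod_add_mul_ediv] using
      h (x / p) (x % p).toNat (by omega) (by omega)
  · intro h l r hr₁ hr₂
    refine h _ fun hdvd => ?_
    have := Int.eq_zero_of_dvd_of_nonneg_of_lt (Int.natCast_nonneg r) (by omega)
      ((dvd_add_left (dvd_mul_right _ l)).mp hdvd)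
    omega

lemma eq_zero_of_periodic_of_summable_sq {E : Type*} [NormedAddCommGroup E] {f : ℤ → E}
    (hf : Summable fun k => ‖f k‖ ^ 2) {c : ℤ} (hc : c ≠ 0) {x : ℤ}
    (h : Function.Periodic (fun k => f (x + c * k)) 1) : f x = 0 := by
  have hconst : ∀ k : ℤ, f (x + c * k) = f x := fun k => by
    simpa using h.int_mul_eq k
  have hinj : Function.Injective fun k : ℤ => x + c * k := fun a b hab => by
    simpa [hc] using hab
  have := hf.comp_injective hinj
  simp only [Function.comp_def, hconst, summable_const_iff] at this
  simpa using this

lemma IsSwapSymmetric.of_even_of_vanish {α : Type*} [Zero α] {p : ℤ} {φ : ℤ → α}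
    {σ : ℤ → ℤ} (hσ : Function.Involutive σ) (hσp : ∀ x k, σ (x + p * k) = σ x + p * k)
    (heven : ∀ l, φ (p * l) = φ (-(p * l))) (hvan : ∀ x, ¬p ∣ x → φ x = 0) :
    IsSwapSymmetric σ φ := by
  intro m n
  by_cases hmn : p ∣ n - m
  · obtain ⟨k, hk⟩ := hmn
    rw [show n = m + p * k by omega, hσp, show σ m - (σ m + p * k) = -(p * k) by ring,
      show m + p * k - m = p * k by ring, heven]
  · have hσmn : ¬p ∣ σ m - σ n := fun ⟨k, hk⟩ => hmn ⟨-k, by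
      rw [← hσ n, show σ n = σ m + p * -k by linarith, hσp, hσ]; ring⟩
    rw [hvan _ hσmn, hvan _ hmn]

def swapMod (p i j : ℕ) (x : ℤ) : ℤ := Equiv.swap (i : ℤ) j (x % p) + p * (x / p)

def natSwapMod (p i j : ℕ) (n : ℕ) : ℕ := Equiv.swap i j (n % p) + p * (n / p)

section swapMod

variable {p i j : ℕ}

lemma natCast_natSwapMod (n : ℕ) : (natSwapMod p i j n : ℤ) = swapMod p i j n := by
  simp [natSwapMod, swapMod, Nat.cast_injective.map_swap]

lemma swapMod_add_mul (hp : p ≠ 0) (x k : ℤ) :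
    swapMod p i j (x + p * k) = swapMod p i j x + p * k := by
  simp only [swapMod, Int.add_mul_emod_self_left,
    Int.add_mul_ediv_left _ _ (Int.natCast_ne_zero.mpr hp)]
  ring

lemma swapMod_of_lt {r : ℤ} (h₀ : 0 ≤ r) (hr : r < p) :
    swapMod p i j r = Equiv.swap (i : ℤ) j r := by
  simp [swapMod, Int.emod_eq_of_lt h₀ hr, Int.ediv_eq_zero_of_lt h₀ hr]

lemma swapMod_add_mul_of_lt {r : ℤ} (h₀ : 0 ≤ r) (hr : r < p) (k : ℤ) :
    swapMod p i j (r + p * k) = Equiv.swap (i : ℤ) j r + p * k := by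
  rw [swapMod_add_mul (by omega), swapMod_of_lt h₀ hr]

lemma swapMod_involutive (hi : i < p) (hj : j < p) : Function.Involutive (swapMod p i j) := by
  intro x
  have h₀ : 0 ≤ x % p := Int.emod_nonneg x (by omega)
  have hlt : x % p < p := Int.emod_lt_of_pos x (by omega)
  have hτ : 0 ≤ Equiv.swap (i : ℤ) j (x % p) ∧ Equiv.swap (i : ℤ) j (x % p) < p := by
    rw [Equiv.swap_apply_def]; split_ifs <;> omega
  change swapMod p i j (Equiv.swap (i : ℤ) j (x % p) + p * (x / p)) = x
  rw [swapMod_add_mul_of_lt hτ.1 hτ.2, Equiv.swap_apply_self, Int.emod_add_mul_ediv]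

lemma swapMod_of_dvd_sub_left (hi : i < p) {x : ℤ} (h : (p : ℤ) ∣ x - i) :
    swapMod p i j x = x + (j - i) := by
  obtain ⟨k, hk⟩ := h
  rw [show x = i + p * k by omega, swapMod_add_mul_of_lt (by omega) (by omega),
    Equiv.swap_apply_left]
  ring

lemma swapMod_of_dvd_sub_right (hj : j < p) {x : ℤ} (h : (p : ℤ) ∣ x - j) :
    swapMod p i j x = x + (i - j) := by
  obtain ⟨k, hk⟩ := h
  rw [show x = j + p * k by omega, swapMod_add_mul_of_lt (by omega) (by omega),
    Equiv.swap_apply_right]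
  ring

lemma swapMod_of_not_dvd {x : ℤ} (hi : ¬(p : ℤ) ∣ x - i) (hj : ¬(p : ℤ) ∣ x - j) :
    swapMod p i j x = x := by
  have hne : ∀ a : ℕ, ¬(p : ℤ) ∣ x - a → x % p ≠ a := fun a ha h =>
    ha (by rw [← Int.emod_add_mul_ediv x p, h]; exact ⟨x / p, by ring⟩)
  rw [swapMod, Equiv.swap_apply_of_ne_of_ne (hne i hi) (hne j hj), Int.emod_add_mul_ediv]

lemma swapMod_left (hi : i < p) : swapMod p i j i = j := by
  rw [swapMod_of_lt (by omega) (by omega), Equiv.swap_apply_left]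

lemma swapMod_right (hj : j < p) : swapMod p i j j = i := by
  rw [swapMod_of_lt (by omega) (by omega), Equiv.swap_apply_right]

lemma natSwapMod_involutive (hi : i < p) (hj : j < p) : Function.Involutive (natSwapMod p i j) :=
  fun n => Nat.cast_injective (R := ℤ) <| by
    rw [natCast_natSwapMod, natCast_natSwapMod, swapMod_involutive hi hj]

variable {α : Type*} {φ : ℤ → α}

lemma IsSwapSymmetric.apply_mul_eq_apply_neg_mul (H : IsSwapSymmetric (swapMod p i j) φ)
    (hi : i < p) (l : ℤ) : φ (p * l) = φ (-(p * l)) := by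
  have h := H (i + p * l) i
  rwa [swapMod_of_dvd_sub_left hi ⟨l, by ring⟩, swapMod_left hi,
    show (i : ℤ) + p * l + (j - i) - j = p * l by ring,
    show (i : ℤ) - (i + p * l) = -(p * l) by ring] at h

lemma IsSwapSymmetric.apply_sub_eq_of_not_dvd (H : IsSwapSymmetric (swapMod p i j) φ)
    (hi : i < p) (hp : (p : ℤ) = 2 * (j - i)) {d : ℤ}
    (hd : ¬(p : ℤ) ∣ d) (hdq : ¬(p : ℤ) ∣ d - (j - i)) : φ (d - p) = φ d := by
  have h₁ : φ (j - (i + d)) = φ d := by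
    have h := H i (i + d)
    rwa [swapMod_left hi, swapMod_of_not_dvd (by rwa [add_sub_cancel_left])
      (by rwa [show (i : ℤ) + d - j = d - (j - i) by ring]), add_sub_cancel_left] at h
  have h₂ : φ (i + d - (j - i) - j) = φ (i - (i + d - (j - i))) := by
    have h := H (i + d - (j - i)) i
    rwa [swapMod_left hi, swapMod_of_not_dvd
      (by rwa [show (i : ℤ) + d - (j - i) - i = d - (j - i) by ring])
      (by rwa [show (i : ℤ) + d - (j - i) - j = d - p by rw [hp]; ring, dvd_sub_self_right])]
      at h
  calc φ (d - p) = φ (i + d - (j - i) - j) := by congr 1; linear_combination -hp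
    _ = φ (i - (i + d - (j - i))) := h₂
    _ = φ (j - (i + d)) := by congr 1; ring
    _ = φ d := h₁

lemma IsSwapSymmetric.apply_add_two_mul_eq_of_dvd (H : IsSwapSymmetric (swapMod p i j) φ)
    (hi : i < p) (hj : j < p) (hp : (p : ℤ) = 2 * (j - i))
    {d : ℤ} (hdq : (p : ℤ) ∣ d - (j - i)) : φ (d + 2 * p) = φ d := by
  obtain ⟨t, ht⟩ := hdq
  have h₁ := H i (i + (d + 2 * p))
  have h₂ := H j (j + d)
  rw [swapMod_left hi, swapMod_of_dvd_sub_right hj ⟨t + 2, by linear_combination ht⟩,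
    add_sub_cancel_left] at h₁
  rw [swapMod_right hj, swapMod_of_dvd_sub_left hi ⟨t + 1, by linear_combination ht - hp⟩,
    add_sub_cancel_left] at h₂
  rw [← h₁, ← h₂]
  congr 1
  linear_combination -2 * hp

lemma IsSwapSymmetric.apply_add_two_mul_eq_of_not_dvd (H : IsSwapSymmetric (swapMod p i j) φ)
    (hi : i < p) (hj : j < p) (hp : (p : ℤ) = 2 * (j - i))
    {y : ℤ} (hy : ¬(p : ℤ) ∣ y) : φ (y + 2 * p) = φ y := by
  by_cases hyq : (p : ℤ) ∣ y - (j - i)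
  · exact H.apply_add_two_mul_eq_of_dvd hi hj hp hyq
  have h₁ := H.apply_sub_eq_of_not_dvd hi hp (d := y + p) (by rwa [dvd_add_self_right])
    (by rwa [add_sub_right_comm, dvd_add_self_right])
  have h₂ := H.apply_sub_eq_of_not_dvd hi hp (d := y + p + p)
    (by rwa [dvd_add_self_right, dvd_add_self_right])
    (by rwa [add_sub_right_comm, dvd_add_self_right, add_sub_right_comm, dvd_add_self_right])
  rw [add_sub_cancel_right] at h₁ h₂
  rw [two_mul, ← add_assoc, ← h₂, h₁]

lemma IsSwapSymmetric.eq_zero_of_not_dvd [NormedAddCommGroup α]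
    (H : IsSwapSymmetric (swapMod p i j) φ) (hi : i < p) (hj : j < p)
    (hp : (p : ℤ) = 2 * (j - i)) (hφ : Summable fun k => ‖φ k‖ ^ 2) {x : ℤ}
    (hx : ¬(p : ℤ) ∣ x) : φ x = 0 :=
  eq_zero_of_periodic_of_summable_sq hφ (c := 2 * p) (by omega) fun k => by
    dsimp only
    rw [mul_add, mul_one, ← add_assoc]
    exact H.apply_add_two_mul_eq_of_not_dvd hi hj hp (by rwa [dvd_add_left ⟨2 * k, by ring⟩])

lemma isSwapSymmetric_swapMod_iff [NormedAddCommGroup α] (hi : i < p) (hj : j < p)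
    (hp : (p : ℤ) = 2 * (j - i)) (hφ : Summable fun k => ‖φ k‖ ^ 2) :
    IsSwapSymmetric (swapMod p i j) φ ↔
      (∀ l : ℤ, φ (p * l) = φ (-(p * l))) ∧ ∀ x, ¬(p : ℤ) ∣ x → φ x = 0 :=
  ⟨fun H => ⟨H.apply_mul_eq_apply_neg_mul hi, fun _ => H.eq_zero_of_not_dvd hi hj hp hφ⟩,
    fun ⟨heven, hvan⟩ => .of_even_of_vanish (swapMod_involutive hi hj)
      (swapMod_add_mul (by omega)) heven hvan⟩

end swapMod

lemma apply_eq_conj_apply_natSwapMod {p i j : ℕ} (hp : 0 < p) {C : HardySpace → HardySpace}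
    (hC1 : ∀ (a : HardySpace) (k : ℕ), (C a) (i + p * k) = conj (a (j + p * k)))
    (hC2 : ∀ (a : HardySpace) (k : ℕ), (C a) (j + p * k) = conj (a (i + p * k)))
    (hC3 : ∀ (a : HardySpace) (k m : ℕ), m < p → m ≠ i → m ≠ j →
      (C a) (m + p * k) = conj (a (m + p * k)))
    (a : HardySpace) (n : ℕ) : C a n = conj (a (natSwapMod p i j n)) := by
  rw [natSwapMod]
  conv_lhs => rw [← Nat.mod_add_div n p]
  rcases eq_or_ne (n % p) i with hni | hni
  · rw [hni, Equiv.swap_apply_left, hC1]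
  rcases eq_or_ne (n % p) j with hnj | hnj
  · rw [hnj, Equiv.swap_apply_right, hC2]
  rw [Equiv.swap_apply_of_ne_of_ne hni hnj, hC3 a _ _ (Nat.mod_lt n hp) hni hnj]

theorem toeplitz_Cpij_symmetric_iff_even_general (p i j : ℕ) (hpe : Even p)
    (hjp : j < p) (hdiff : j - i = p / 2)
    (φhat : ℤ → ℂ) (hsq : Summable fun k => ‖φhat k‖ ^ 2)
    (T : HardySpace →L[ℂ] HardySpace)
    (hT : ∀ j' m : ℕ, (T (e j')) m = φhat ((m : ℤ) - (j' : ℤ)))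
    (C : HardySpace → HardySpace)
    (hC1 : ∀ (a : HardySpace) (k : ℕ), (C a) (i + p * k) = conj (a (j + p * k)))
    (hC2 : ∀ (a : HardySpace) (k : ℕ), (C a) (j + p * k) = conj (a (i + p * k)))
    (hC3 : ∀ (a : HardySpace) (k m : ℕ), m < p → m ≠ i → m ≠ j →
      (C a) (m + p * k) = conj (a (m + p * k))) :
    (∀ x, C (T (C x)) = ContinuousLinearMap.adjoint T x) ↔
      ((∀ l : ℤ, φhat ((p : ℤ) * l) = φhat (-((p : ℤ) * l))) ∧
        ∀ (l : ℤ) (r : ℕ), 1 ≤ r → r ≤ p - 1 → φhat ((r : ℤ) + p * l) = 0) := by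
  have hp : (p : ℤ) = 2 * (j - i) := by
    obtain ⟨t, ht⟩ := hpe
    omega
  have hi : i < p := by omega
  rw [comp_conj_perm_eq_adjoint_iff (natSwapMod_involutive hi hjp)
      (apply_eq_conj_apply_natSwapMod (by omega) hC1 hC2 hC3),
    forall_add_mul_eq_zero_iff (by omega), ← isSwapSymmetric_swapMod_iff hi hjp hp hsq,
    isSwapSymmetric_iff_forall_natCast (swapMod_add_mul (by omega)) (by omega)]
  simp only [hT, natCast_natSwapMod]

/-- Characterization of `C_p^{i,j}`-symmetric Toeplitz operators when `p` is even and
`j - i = p/2`: `C_p^{i,j} T_φ C_p^{i,j} = T_φ*` iff `φhat (pl) = φhat (-pl)` for all `l ∈ ℤ`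
and `φhat (r + pl) = 0` for all `l ∈ ℤ` and `1 ≤ r ≤ p-1`. Here `φhat` is the (square-summable)
sequence of Fourier coefficients of `φ ∈ L^∞(𝕋)`, `T_φ` acts on the basis by
`(T_φ e_j)_m = φhat (m-j)`, and `C_p^{i,j}` swaps-and-conjugates the coefficients at indices
`i + pk` and `j + pk` and conjugates all others. -/
theorem toeplitz_Cpij_symmetric_iff_even (p i j : ℕ) (hpe : Even p)
    (hij : i < j) (hjp : j < p) (hdiff : j - i = p / 2)
    (φhat : ℤ → ℂ) (hsq : Summable fun k => ‖φhat k‖ ^ 2)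
    (T : HardySpace →L[ℂ] HardySpace)
    (hT : ∀ j' m : ℕ, (T (e j')) m = φhat ((m : ℤ) - (j' : ℤ)))
    (C : HardySpace → HardySpace)
    (hC1 : ∀ (a : HardySpace) (k : ℕ), (C a) (i + p * k) = conj (a (j + p * k)))
    (hC2 : ∀ (a : HardySpace) (k : ℕ), (C a) (j + p * k) = conj (a (i + p * k)))
    (hC3 : ∀ (a : HardySpace) (k m : ℕ), m < p → m ≠ i → m ≠ j →
      (C a) (m + p * k) = conj (a (m + p * k))) :
    (∀ x, C (T (C x)) = ContinuousLinearMap.adjoint T x) ↔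
      ((∀ l : ℤ, φhat ((p : ℤ) * l) = φhat (-((p : ℤ) * l))) ∧
        ∀ (l : ℤ) (r : ℕ), 1 ≤ r → r ≤ p - 1 → φhat ((r : ℤ) + p * l) = 0) :=
  toeplitz_Cpij_symmetric_iff_even_general p i j hpe hjp hdiff φhat hsq T hT C hC1 hC2 hC3
end
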